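/- Let b be a smooth ℤ³-periodic divergence-free vector field and J = curl b. Then the pointwise identity ∂_k(b_k b_{L_i})^ε J_i + ∂_k(b_k b_i) J_{L_i}^ε = div[b (b·J_L^ε)] + J_i ∂_k(b_k b_{L_i})^ε − b_i ∂_k(b_k J_{L_i}^ε) holds, where for a field G, G_L^ε(x) = ∫ φ^ε(ℓ) n(ℓ)(n(ℓ)·G(x+ℓ)) dℓ and (b_k G_{L_i})^ε(x) = ∫ φ^ε(ℓ) b_k(x+ℓ) n_i n_m G_m(x+ℓ) dℓ. -/

import Mathlib

noncomputable section
open MeasureTheory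

abbrev E3 := EuclideanSpace ℝ (Fin 3)

def ee (i : Fin 3) : E3 := EuclideanSpace.single i 1

def pd (f : E3 → ℝ) (k : Fin 3) (x : E3) : ℝ := fderiv ℝ f x (ee k)

def nv (ℓ : E3) (i : Fin 3) : ℝ := ℓ i / ‖ℓ‖

def dotp (a b : Fin 3 → ℝ) : ℝ := ∑ i, a i * b i

def Lproj (ℓ : E3) (v : Fin 3 → ℝ) : Fin 3 → ℝ := fun i => nv ℓ i * dotp (nv ℓ) v

def Tproj (ℓ : E3) (v : Fin 3 → ℝ) : Fin 3 → ℝ := fun i => v i - Lproj ℓ v i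

def incr (G : E3 → E3) (ℓ x : E3) : Fin 3 → ℝ := fun i => G (x + ℓ) i - G x i

def Periodic3 (G : E3 → E3) : Prop :=
  ∀ (x : E3) (m : Fin 3 → ℤ), G (x + (WithLp.equiv 2 (Fin 3 → ℝ)).symm (fun i => (m i : ℝ))) = G x

def Mollifier (φ : E3 → ℝ) : Prop :=
  ContDiff ℝ (⊤ : ℕ∞) φ ∧ HasCompactSupport φ ∧ (∀ ℓ, 0 ≤ φ ℓ) ∧
  (∀ ℓ ℓ' : E3, ‖ℓ‖ = ‖ℓ'‖ → φ ℓ = φ ℓ') ∧ (∫ ℓ : E3, φ ℓ) = 1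

def moll (φ : E3 → ℝ) (ε : ℝ) : E3 → ℝ := fun ℓ => (ε ^ 3)⁻¹ * φ (ε⁻¹ • ℓ)

def gradm (φe : E3 → ℝ) (ℓ : E3) : Fin 3 → ℝ := fun i => pd φe i ℓ

def curl3 (G : E3 → E3) (x : E3) : Fin 3 → ℝ :=
  ![pd (fun y => G y 2) 1 x - pd (fun y => G y 1) 2 x,
    pd (fun y => G y 0) 2 x - pd (fun y => G y 2) 0 x,
    pd (fun y => G y 1) 0 x - pd (fun y => G y 0) 1 x]

/- ### Auxiliary lemmas -/

section Aux
open Metric Pointwise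

lemma pd_mul (f g : E3 → ℝ) (k : Fin 3) (x : E3) (hf : DifferentiableAt ℝ f x)
    (hg : DifferentiableAt ℝ g x) :
    pd (fun y => f y * g y) k x = pd f k x * g x + f x * pd g k x := by
  simp only [pd, fderiv_fun_mul hf hg, ContinuousLinearMap.add_apply,
    ContinuousLinearMap.coe_smul', Pi.smul_apply, smul_eq_mul]
  ring

lemma pd_sum (f : Fin 3 → E3 → ℝ) (k : Fin 3) (x : E3)
    (hf : ∀ i, DifferentiableAt ℝ (f i) x) :
    pd (fun y => ∑ i, f i y) k x = ∑ i, pd (f i) k x := by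
  simp only [pd, fderiv_fun_sum (fun i _ => hf i), ContinuousLinearMap.sum_apply]

lemma contDiff_pdf (f : E3 → ℝ) (hf : ContDiff ℝ (⊤ : ℕ∞) f) (k : Fin 3) :
    ContDiff ℝ (⊤ : ℕ∞) (fun x => pd f k x) :=
  (hf.fderiv_right (by simp)).clm_apply contDiff_const

lemma abs_nv_le (ℓ : E3) (i : Fin 3) : |nv ℓ i| ≤ 1 := by
  rcases eq_or_ne ℓ 0 with h | h
  · simp [nv, h]
  · rw [nv, abs_div, abs_norm, div_le_one (norm_pos_iff.mpr h)]
    calc |ℓ i| = ‖(ℓ : EuclideanSpace ℝ (Fin 3)) i‖ := rfl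
      _ ≤ ‖ℓ‖ := by
        have h2 : (ℓ i : ℝ) = inner ℝ (EuclideanSpace.single i (1:ℝ)) ℓ := by
          rw [EuclideanSpace.inner_single_left]; simp
        rw [Real.norm_eq_abs, h2]
        calc |inner ℝ (EuclideanSpace.single i (1:ℝ)) ℓ| ≤ ‖EuclideanSpace.single i (1:ℝ)‖ * ‖ℓ‖ :=
            abs_real_inner_le_norm _ _
          _ = ‖ℓ‖ := by rw [EuclideanSpace.norm_single]; simp

lemma moll_contDiff (φ : E3 → ℝ) (hφ : ContDiff ℝ (⊤ : ℕ∞) φ) (ε : ℝ) :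
    ContDiff ℝ (⊤ : ℕ∞) (moll φ ε) :=
  contDiff_const.mul (hφ.comp (contDiff_const_smul ε⁻¹))

lemma moll_compact (φ : E3 → ℝ) (hφ : HasCompactSupport φ) (ε : ℝ) (hε : 0 < ε) :
    HasCompactSupport (moll φ ε) :=
  (hφ.comp_smul (c := ε⁻¹) (by positivity)).mul_left

lemma contDiff_curl (b : E3 → E3) (hb : ContDiff ℝ (⊤ : ℕ∞) b) (m : Fin 3) :
    ContDiff ℝ (⊤ : ℕ∞) (fun y => curl3 b y m) := by
  have hc : ∀ j, ContDiff ℝ (⊤ : ℕ∞) (fun y => b y j) := fun j => contDiff_euclidean.mp hb j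
  fin_cases m <;> simp only [curl3, Matrix.cons_val_zero, Matrix.cons_val_one, Matrix.head_cons,
    Matrix.cons_val_two, Matrix.tail_cons, Fin.isValue] <;>
    exact (contDiff_pdf _ (hc _) _).sub (contDiff_pdf _ (hc _) _)

set_option maxHeartbeats 1000000 in
lemma key_diff (b : E3 → E3) (hb : ContDiff ℝ (⊤ : ℕ∞) b) (φ : E3 → ℝ) (hφ : Mollifier φ)
    (ε : ℝ) (hε : 0 < ε) (i : Fin 3) (x : E3) :
    DifferentiableAt ℝ
      (fun y => ∫ ℓ : E3, moll φ ε ℓ * Lproj ℓ (fun m => curl3 b (y + ℓ) m) i) x := by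
  classical
  set J : Fin 3 → E3 → ℝ := fun m z => curl3 b z m with hJdef
  have hJ : ∀ m, ContDiff ℝ (⊤ : ℕ∞) (J m) := contDiff_curl b hb
  have hJc : ∀ m, Continuous (J m) := fun m => (hJ m).continuous
  have hJ' : ∀ m, Continuous (fun z => fderiv ℝ (J m) z) :=
    fun m => (ContDiff.continuous (n := (⊤ : ℕ∞)) ((hJ m).fderiv_right (by simp)))
  have hmc : Continuous (moll φ ε) := (moll_contDiff φ hφ.1 ε).continuous
  have hmK : HasCompactSupport (moll φ ε) := moll_compact φ hφ.2.1 ε hε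
  set K : Set E3 := tsupport (moll φ ε) with hKdef
  have hKc : IsCompact K := hmK
  -- rewrite integrand
  have hFeq : (fun y => ∫ ℓ : E3, moll φ ε ℓ * Lproj ℓ (fun m => curl3 b (y + ℓ) m) i)
      = fun y => ∫ ℓ : E3, (moll φ ε ℓ * nv ℓ i) * ∑ m, nv ℓ m * J m (y + ℓ) := by
    funext y; congr 1; funext ℓ; simp only [Lproj, dotp, hJdef]; ring
  rw [hFeq]
  set F : E3 → E3 → ℝ := fun y ℓ => (moll φ ε ℓ * nv ℓ i) * ∑ m, nv ℓ m * J m (y + ℓ) with hFdef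
  set F' : E3 → E3 → (E3 →L[ℝ] ℝ) :=
    fun y ℓ => (moll φ ε ℓ * nv ℓ i) • ∑ m, nv ℓ m • fderiv ℝ (J m) (y + ℓ) with hF'def
  -- measurability helpers
  have mnv : ∀ m : Fin 3, Measurable (fun ℓ : E3 => nv ℓ m) := by
    intro m
    exact ((EuclideanSpace.proj m).continuous.measurable).div continuous_norm.measurable
  have mF : ∀ y, AEStronglyMeasurable (F y) volume := by
    intro y
    refine ((hmc.measurable.mul (mnv i)).mul ?_).aestronglyMeasurable
    exact Finset.measurable_sum _ fun m _ =>
      (mnv m).mul ((hJc m).comp (continuous_const.add continuous_id)).measurable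
  -- uniform bound constant
  set S : Set E3 := closedBall x 1 + K with hSdef
  have hSc : IsCompact S := (isCompact_closedBall x 1).add hKc
  have hg : Continuous (fun z => (∑ m, |J m z|) + ∑ m, ‖fderiv ℝ (J m) z‖) := by
    exact ((continuous_finset_sum _ fun m _ => (hJc m).abs).add
      (continuous_finset_sum _ fun m _ => (hJ' m).norm))
  obtain ⟨C, hC⟩ := hSc.exists_bound_of_continuousOn hg.continuousOn
  set C' : ℝ := max C 0 with hC'def
  have hC'0 : 0 ≤ C' := le_max_right _ _
  have hCs : ∀ z ∈ S, (∑ m, |J m z|) + ∑ m, ‖fderiv ℝ (J m) z‖ ≤ C' := by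
    intro z hz
    exact le_trans (le_trans (le_abs_self _) ((Real.norm_eq_abs _) ▸ hC z hz)) (le_max_left _ _)
  have hsum_nonneg : ∀ z, (0:ℝ) ≤ ∑ m, |J m z| := fun z => Finset.sum_nonneg fun m _ => abs_nonneg _
  have hsum'_nonneg : ∀ z, (0:ℝ) ≤ ∑ m, ‖fderiv ℝ (J m) z‖ :=
    fun z => Finset.sum_nonneg fun m _ => norm_nonneg _
  have hmem : ∀ {ℓ : E3}, moll φ ε ℓ ≠ 0 → ∀ y ∈ closedBall x 1, y + ℓ ∈ S := by
    intro ℓ hℓ y hy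
    exact Set.add_mem_add hy (subset_tsupport _ hℓ)
  -- the bound function
  have hbound_int : Integrable (fun ℓ => |moll φ ε ℓ| * C') volume := by
    refine (Continuous.integrable_of_hasCompactSupport (hmc.abs.mul continuous_const) ?_)
    exact ((hmK.abs).mul_right)
  -- derivative of integrand
  have hder : ∀ (ℓ : E3) (y : E3), HasFDerivAt (fun y => F y ℓ) (F' y ℓ) y := by
    intro ℓ y
    have hm : ∀ m : Fin 3, HasFDerivAt (fun y => J m (y + ℓ)) (fderiv ℝ (J m) (y + ℓ)) y := by
      intro m
      have h1 := (((hJ m).differentiable (by simp)) (y + ℓ)).hasFDerivAt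
      have h2 := h1.comp y ((hasFDerivAt_id y).add_const ℓ)
      exact h2
    have hsum : HasFDerivAt (fun y => ∑ m, nv ℓ m * J m (y + ℓ))
        (∑ m, nv ℓ m • fderiv ℝ (J m) (y + ℓ)) y :=
      HasFDerivAt.fun_sum fun m _ => (hm m).const_mul (nv ℓ m)
    exact hsum.const_mul _
  -- bound on derivative
  have hbnd : ∀ (ℓ : E3), ∀ y ∈ ball x 1, ‖F' y ℓ‖ ≤ |moll φ ε ℓ| * C' := by
    intro ℓ y hy
    rcases eq_or_ne (moll φ ε ℓ) 0 with h0 | h0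
    · simp [hF'def, h0]
    · have hyS : y + ℓ ∈ S := hmem h0 y (ball_subset_closedBall hy)
      have h1 : ‖F' y ℓ‖ ≤ |moll φ ε ℓ * nv ℓ i| * ∑ m, ‖fderiv ℝ (J m) (y + ℓ)‖ := by
        simp only [hF'def]
        rw [norm_smul (α := ℝ) (β := E3 →L[ℝ] ℝ), Real.norm_eq_abs]
        refine mul_le_mul_of_nonneg_left ?_ (abs_nonneg _)
        refine le_trans (norm_sum_le _ _) (Finset.sum_le_sum fun m _ => ?_)
        rw [norm_smul (α := ℝ) (β := E3 →L[ℝ] ℝ), Real.norm_eq_abs]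
        exact mul_le_of_le_one_left (norm_nonneg _) (abs_nv_le ℓ m)
      refine h1.trans ?_
      have h2 : |moll φ ε ℓ * nv ℓ i| ≤ |moll φ ε ℓ| := by
        rw [abs_mul]
        exact mul_le_of_le_one_right (abs_nonneg _) (abs_nv_le ℓ i)
      have h3 : ∑ m, ‖fderiv ℝ (J m) (y + ℓ)‖ ≤ C' :=
        le_trans (le_add_of_nonneg_left (hsum_nonneg _)) (hCs _ hyS)
      exact mul_le_mul h2 h3 (hsum'_nonneg _) (abs_nonneg _)
  -- integrability of F x
  have hFint : Integrable (F x) volume := by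
    refine (hbound_int.mono' (mF x) ?_)
    refine Filter.Eventually.of_forall fun ℓ => ?_
    rcases eq_or_ne (moll φ ε ℓ) 0 with h0 | h0
    · simp [hFdef, h0]
    · have hxS : x + ℓ ∈ S := hmem h0 x (mem_closedBall_self zero_le_one)
      rw [hFdef, Real.norm_eq_abs, abs_mul]
      have h2 : |moll φ ε ℓ * nv ℓ i| ≤ |moll φ ε ℓ| := by
        rw [abs_mul]; exact mul_le_of_le_one_right (abs_nonneg _) (abs_nv_le ℓ i)
      have h3 : |∑ m, nv ℓ m * J m (x + ℓ)| ≤ C' := by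
        refine le_trans (Finset.abs_sum_le_sum_abs _ _) ?_
        have : ∑ m, |nv ℓ m * J m (x + ℓ)| ≤ ∑ m, |J m (x + ℓ)| := by
          refine Finset.sum_le_sum fun m _ => ?_
          rw [abs_mul]
          exact mul_le_of_le_one_left (abs_nonneg _) (abs_nv_le ℓ m)
        exact this.trans (le_trans (le_add_of_nonneg_right (hsum'_nonneg _)) (hCs _ hxS))
      exact mul_le_mul h2 h3 (abs_nonneg _) (abs_nonneg _)
  -- measurability of F' x
  have hF'meas : AEStronglyMeasurable (F' x) volume := by
    refine AEStronglyMeasurable.smul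
      ((hmc.measurable.mul (mnv i)).aestronglyMeasurable) ?_
    refine Finset.aestronglyMeasurable_fun_sum _ fun m _ => ?_
    exact AEStronglyMeasurable.smul ((mnv m).aestronglyMeasurable)
      (((hJ' m).comp (continuous_const.add continuous_id)).aestronglyMeasurable)
  have := hasFDerivAt_integral_of_dominated_of_fderiv_le (μ := volume) (F := F) (F' := F')
    (x₀ := x) (bound := fun ℓ => |moll φ ε ℓ| * C') (ball_mem_nhds x zero_lt_one)
    (Filter.Eventually.of_forall mF) hFint hF'meas
    (Filter.Eventually.of_forall fun ℓ => fun y hy => hbnd ℓ y hy) hbound_int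
    (Filter.Eventually.of_forall fun ℓ => fun y _ => hder ℓ y)
  exact this.differentiableAt

end Aux

/-- For divergence-free periodic b with J = curl b:
∂_k(b_k b_{L_i})^ε J_i + ∂_k(b_k b_i) J_{L_i}^ε
  = div[b(b·J_L^ε)] + J_i ∂_k(b_k b_{L_i})^ε − b_i ∂_k(b_k J_{L_i}^ε). -/
theorem stmt17 (b : E3 → E3) (hb : ContDiff ℝ (⊤ : ℕ∞) b) (hbp : Periodic3 b)
    (hdiv : ∀ x, ∑ i, pd (fun y => b y i) i x = 0)
    (φ : E3 → ℝ) (hφ : Mollifier φ) (ε : ℝ) (hε : 0 < ε) (x : E3) :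
    (∑ i, ∑ k, pd (fun y =>
          ∫ ℓ : E3, moll φ ε ℓ * (b (y + ℓ) k * Lproj ℓ (fun m => b (y + ℓ) m) i)) k x
        * curl3 b x i)
      + (∑ i, ∑ k, pd (fun y => b y k * b y i) k x
          * (∫ ℓ : E3, moll φ ε ℓ * Lproj ℓ (fun m => curl3 b (x + ℓ) m) i))
      = (∑ k, pd (fun y => b y k * ∑ i, b y i
            * (∫ ℓ : E3, moll φ ε ℓ * Lproj ℓ (fun m => curl3 b (y + ℓ) m) i)) k x)
        + (∑ i, ∑ k, curl3 b x i * pd (fun y =>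
            ∫ ℓ : E3, moll φ ε ℓ * (b (y + ℓ) k * Lproj ℓ (fun m => b (y + ℓ) m) i)) k x)
        - (∑ i, ∑ k, b x i * pd (fun y => b y k
            * (∫ ℓ : E3, moll φ ε ℓ * Lproj ℓ (fun m => curl3 b (y + ℓ) m) i)) k x) := by
  have hbd : ∀ (j : Fin 3) (y : E3), DifferentiableAt ℝ (fun z => b z j) y :=
    fun j y => ((contDiff_euclidean.mp hb j).differentiable (by simp)) y
  have hFd : ∀ (i : Fin 3) (y : E3), DifferentiableAt ℝ
      (fun z => ∫ ℓ : E3, moll φ ε ℓ * Lproj ℓ (fun m => curl3 b (z + ℓ) m) i) y :=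
    fun i y => key_diff b hb φ hφ ε hε i y
  have e2 : ∀ i k : Fin 3, pd (fun y => b y k * b y i) k x
      = pd (fun y => b y k) k x * b x i + b x k * pd (fun y => b y i) k x :=
    fun i k => pd_mul _ _ _ _ (hbd k x) (hbd i x)
  have e3 : ∀ i k : Fin 3, pd (fun y => b y k
        * (∫ ℓ : E3, moll φ ε ℓ * Lproj ℓ (fun m => curl3 b (y + ℓ) m) i)) k x
      = pd (fun y => b y k) k x * (∫ ℓ : E3, moll φ ε ℓ * Lproj ℓ (fun m => curl3 b (x + ℓ) m) i)
        + b x k * pd (fun y => ∫ ℓ : E3, moll φ ε ℓ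
            * Lproj ℓ (fun m => curl3 b (y + ℓ) m) i) k x :=
    fun i k => pd_mul _ _ _ _ (hbd k x) (hFd i x)
  have e1 : ∀ k : Fin 3, pd (fun y => b y k * ∑ i, b y i
        * (∫ ℓ : E3, moll φ ε ℓ * Lproj ℓ (fun m => curl3 b (y + ℓ) m) i)) k x
      = pd (fun y => b y k) k x * (∑ i, b x i
          * (∫ ℓ : E3, moll φ ε ℓ * Lproj ℓ (fun m => curl3 b (x + ℓ) m) i))
        + b x k * ∑ i, (pd (fun y => b y i) k x
            * (∫ ℓ : E3, moll φ ε ℓ * Lproj ℓ (fun m => curl3 b (x + ℓ) m) i)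
          + b x i * pd (fun y => ∫ ℓ : E3, moll φ ε ℓ
              * Lproj ℓ (fun m => curl3 b (y + ℓ) m) i) k x) := by
    intro k
    rw [pd_mul _ _ _ _ (hbd k x)
      (DifferentiableAt.fun_sum fun i _ => (hbd i x).fun_mul (hFd i x))]
    congr 1
    congr 1
    rw [pd_sum _ _ _ (fun i => (hbd i x).fun_mul (hFd i x))]
    exact Finset.sum_congr rfl fun i _ => pd_mul _ _ _ _ (hbd i x) (hFd i x)
  have hd := hdiv x
  rw [Fin.sum_univ_three] at hd
  simp only [e1]
  simp only [e2, e3, Fin.sum_univ_three]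
  linear_combination (b x 0 * (∫ ℓ : E3, moll φ ε ℓ * Lproj ℓ (fun m => curl3 b (x + ℓ) m) 0)
      + b x 1 * (∫ ℓ : E3, moll φ ε ℓ * Lproj ℓ (fun m => curl3 b (x + ℓ) m) 1)
      + b x 2 * (∫ ℓ : E3, moll φ ε ℓ * Lproj ℓ (fun m => curl3 b (x + ℓ) m) 2)) * hd
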